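/- The graph G on V with edge-vector adjacency is connected: for any x, y ∈ V there is a finite path in G from x to y, of length (max(x−y) − min(x−y))/(n+1). -/

import Mathlib

open Finset

/-- The vertex set of the 1-skeleton of the Ã_n Coxeter complex:
integer vectors summing to zero with all pairwise coordinate differences divisible by n+1. -/
def inV (n : ℕ) (x : Fin (n+1) → ℤ) : Prop :=
  (∑ i, x i = 0) ∧ ∀ i j, ((n : ℤ) + 1) ∣ x i - x j

/-- Maximum coordinate. -/
def maxC (n : ℕ) (x : Fin (n+1) → ℤ) : ℤ := univ.sup' univ_nonempty x

/-- Minimum coordinate. -/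
def minC (n : ℕ) (x : Fin (n+1) → ℤ) : ℤ := univ.inf' univ_nonempty x

/-- An edge vector: coordinates sum to 0, pairwise differences divisible by n+1,
and max minus min equals n+1. -/
def isEdge (n : ℕ) (e : Fin (n+1) → ℤ) : Prop :=
  inV n e ∧ maxC n e - minC n e = (n : ℤ) + 1

/-- Height of a vertex: (max − min)/(n+1). -/
def height (n : ℕ) (x : Fin (n+1) → ℤ) : ℤ :=
  (maxC n x - minC n x) / ((n : ℤ) + 1)

/-- The edge vector associated to a subset S: value n+1−|S| on S and −|S| off S. -/
def eVec (n : ℕ) (S : Finset (Fin (n+1))) : Fin (n+1) → ℤ :=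
  fun i => if i ∈ S then (n : ℤ) + 1 - S.card else -(S.card : ℤ)

lemma inV_zero (n : ℕ) : inV n 0 := ⟨by simp, fun i j => by simp⟩

lemma maxC_neg (n : ℕ) (x : Fin (n+1) → ℤ) : maxC n (-x) = - minC n x := by
  unfold maxC minC
  apply le_antisymm
  · apply Finset.sup'_le
    intro i hi
    have h1 : univ.inf' univ_nonempty x ≤ x i := Finset.inf'_le _ hi
    have h2 : (-x) i = -(x i) := rfl
    omega
  · obtain ⟨i, hi, h⟩ := Finset.exists_mem_eq_inf' (univ_nonempty) x
    rw [h]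
    have h1 : (-x) i ≤ univ.sup' univ_nonempty (-x) := Finset.le_sup' (-x) hi
    have h2 : (-x) i = -(x i) := rfl
    omega

lemma minC_neg (n : ℕ) (x : Fin (n+1) → ℤ) : minC n (-x) = - maxC n x := by
  have := maxC_neg n (-x)
  rw [neg_neg] at this
  unfold maxC minC at *
  omega

lemma isEdge_neg {n : ℕ} {e : Fin (n+1) → ℤ} (h : isEdge n e) : isEdge n (-e) := by
  obtain ⟨⟨h1, h2⟩, h3⟩ := h
  refine ⟨⟨by simp [h1], fun i j => by
    have h' : (-e) i - (-e) j = e j - e i := by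
      simp only [Pi.neg_apply]; ring
    rw [h']; exact h2 j i⟩, ?_⟩
  rw [maxC_neg, minC_neg]
  omega

/-- The graph G on V with edge-vector adjacency. -/
def G (n : ℕ) : SimpleGraph {x : Fin (n+1) → ℤ // inV n x} where
  Adj x y := isEdge n (y.1 - x.1)
  symm := by
    constructor
    intro x y h
    have := isEdge_neg h
    rwa [neg_sub] at this
  loopless := by
    constructor
    intro x h
    obtain ⟨-, h3⟩ := h
    rw [sub_self] at h3
    simp [maxC, minC] at h3
    omega

/-!
Write `d = x - y` and call `maxC d - minC d` its spread; it is a multiple of `n + 1` because all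
coordinates of `d` are congruent mod `n + 1`. If the spread is `0`, `d` is constant with sum `0`,
so `x = y`. Otherwise let `S` be the set of coordinates where `d` is maximal and step from `x` to
`x - eVec S`. The maximal coordinates of `d` drop by `n + 1 - #S` and all others rise by `#S`;
since the non-maximal ones sit at least `n + 1` below the maximum, the spread drops by exactly
`n + 1`.
-/

variable {n : ℕ}

lemma le_maxC (x : Fin (n+1) → ℤ) (i : Fin (n+1)) : x i ≤ maxC n x :=
  le_sup' x (mem_univ i)

lemma minC_le (x : Fin (n+1) → ℤ) (i : Fin (n+1)) : minC n x ≤ x i :=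
  inf'_le x (mem_univ i)

lemma exists_eq_maxC (x : Fin (n+1) → ℤ) : ∃ i, x i = maxC n x := by
  obtain ⟨i, -, hi⟩ := exists_mem_eq_sup' univ_nonempty x
  exact ⟨i, hi.symm⟩

lemma exists_eq_minC (x : Fin (n+1) → ℤ) : ∃ i, x i = minC n x := by
  obtain ⟨i, -, hi⟩ := exists_mem_eq_inf' univ_nonempty x
  exact ⟨i, hi.symm⟩

lemma maxC_eq_of_forall_le {x : Fin (n+1) → ℤ} {a : ℤ} (h : ∀ i, x i ≤ a) (i : Fin (n+1))
    (hi : x i = a) : maxC n x = a :=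
  le_antisymm (sup'_le _ _ fun j _ => h j) (hi ▸ le_maxC x i)

lemma minC_eq_of_forall_ge {x : Fin (n+1) → ℤ} {a : ℤ} (h : ∀ i, a ≤ x i) (i : Fin (n+1))
    (hi : x i = a) : minC n x = a :=
  le_antisymm (hi ▸ minC_le x i) (le_inf' _ _ fun j _ => h j)

namespace inV

variable {x y : Fin (n+1) → ℤ}

lemma sub (hx : inV n x) (hy : inV n y) : inV n (x - y) := by
  refine ⟨by simp [sum_sub_distrib, hx.1, hy.1], fun i j => ?_⟩
  have h : (x - y) i - (x - y) j = (x i - x j) - (y i - y j) := by simp only [Pi.sub_apply]; ring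
  exact h ▸ dvd_sub (hx.2 i j) (hy.2 i j)

lemma le_sub_of_lt (hx : inV n x) {i j : Fin (n+1)} (h : x i < x j) : x i ≤ x j - (n + 1) := by
  have := Int.le_of_dvd (by omega) (hx.2 j i)
  omega

lemma eq_zero_of_maxC_eq_minC (hx : inV n x) (h : maxC n x = minC n x) : x = 0 := by
  have hconst : ∀ i, x i = maxC n x := fun i => le_antisymm (le_maxC x i) (h ▸ minC_le x i)
  have hsum : ((n : ℤ) + 1) * maxC n x = 0 := by
    simpa [hconst, sum_const, card_univ] using hx.1
  have hmax : maxC n x = 0 := (mul_eq_zero.mp hsum).resolve_left (by omega)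
  funext i
  rw [hconst i, hmax, Pi.zero_apply]

lemma exists_maxC_sub_minC_eq (hx : inV n x) : ∃ k : ℕ, maxC n x - minC n x = k * (n + 1) := by
  obtain ⟨i, hi⟩ := exists_eq_maxC x
  obtain ⟨j, hj⟩ := exists_eq_minC x
  obtain ⟨t, ht⟩ := hx.2 i j
  have hnonneg : 0 ≤ ((n : ℤ) + 1) * t := by
    rw [← ht, hi, hj]
    exact sub_nonneg.mpr (minC_le x i |>.trans (le_maxC x i))
  refine ⟨t.toNat, ?_⟩
  rw [Int.toNat_of_nonneg (nonneg_of_mul_nonneg_right hnonneg (by omega)), ← hi, ← hj, ht]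
  ring

end inV

section eVec

variable {S : Finset (Fin (n+1))}

lemma eVec_apply (S : Finset (Fin (n+1))) (i : Fin (n+1)) :
    eVec n S i = (if i ∈ S then (n : ℤ) + 1 else 0) - #S := by
  unfold eVec
  split_ifs <;> ring

lemma inV_eVec (S : Finset (Fin (n+1))) : inV n (eVec n S) := by
  refine ⟨?_, fun i j => ?_⟩
  · simp only [eVec_apply, sum_sub_distrib, sum_ite_mem, univ_inter, sum_const, card_univ,
      Fintype.card_fin, nsmul_eq_mul]
    push_cast
    ring
  · simp only [eVec_apply]
    split_ifs
    exacts [by simp, ⟨1, by ring⟩, ⟨-1, by ring⟩, by simp]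

lemma maxC_eVec (hS : S.Nonempty) : maxC n (eVec n S) = n + 1 - #S := by
  obtain ⟨i, hi⟩ := hS
  refine maxC_eq_of_forall_le (fun j => ?_) i (by simp [eVec_apply, hi])
  rw [eVec_apply]
  split_ifs <;> omega

lemma minC_eVec (hS : S ≠ univ) : minC n (eVec n S) = -#S := by
  obtain ⟨i, hi⟩ := (eq_univ_iff_forall.not.mp hS |> not_forall.mp)
  refine minC_eq_of_forall_ge (fun j => ?_) i (by simp [eVec_apply, hi])
  rw [eVec_apply]
  split_ifs <;> omega

lemma isEdge_eVec (hS : S.Nonempty) (hS' : S ≠ univ) : isEdge n (eVec n S) :=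
  ⟨inV_eVec S, by rw [maxC_eVec hS, minC_eVec hS']; ring⟩

end eVec

def maxIdx (n : ℕ) (x : Fin (n+1) → ℤ) : Finset (Fin (n+1)) :=
  {i | x i = maxC n x}

section maxIdx

variable {x : Fin (n+1) → ℤ}

lemma mem_maxIdx {i : Fin (n+1)} : i ∈ maxIdx n x ↔ x i = maxC n x := by
  simp [maxIdx]

lemma maxIdx_nonempty (x : Fin (n+1) → ℤ) : (maxIdx n x).Nonempty :=
  (exists_eq_maxC x).imp fun _ => mem_maxIdx.mpr

lemma exists_notMem_maxIdx (h : minC n x < maxC n x) :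
    ∃ j, j ∉ maxIdx n x ∧ x j = minC n x := by
  obtain ⟨j, hj⟩ := exists_eq_minC x
  exact ⟨j, fun hmem => by rw [mem_maxIdx] at hmem; omega, hj⟩

lemma maxIdx_ne_univ (h : minC n x < maxC n x) : maxIdx n x ≠ univ := by
  obtain ⟨j, hj, -⟩ := exists_notMem_maxIdx h
  exact fun hS => hj (hS ▸ mem_univ j)

lemma inV.maxC_sub_eVec_maxIdx (hx : inV n x) :
    maxC n (x - eVec n (maxIdx n x)) = maxC n x - (n + 1) + #(maxIdx n x) := by
  obtain ⟨i, hi⟩ := maxIdx_nonempty x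
  refine maxC_eq_of_forall_le (fun j => ?_) i ?_
  · by_cases hj : j ∈ maxIdx n x
    · rw [Pi.sub_apply, eVec_apply, if_pos hj, mem_maxIdx.mp hj]
      omega
    · have hlt : x j < x i := by
        rw [mem_maxIdx.mp hi]
        exact (le_maxC x j).lt_of_ne (mt mem_maxIdx.mpr hj)
      have := hx.le_sub_of_lt hlt
      rw [Pi.sub_apply, eVec_apply, if_neg hj, ← mem_maxIdx.mp hi]
      omega
  · rw [Pi.sub_apply, eVec_apply, if_pos hi, mem_maxIdx.mp hi]
    ring

lemma inV.minC_sub_eVec_maxIdx (hx : inV n x) (h : minC n x < maxC n x) :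
    minC n (x - eVec n (maxIdx n x)) = minC n x + #(maxIdx n x) := by
  obtain ⟨j, hj, hjmin⟩ := exists_notMem_maxIdx h
  obtain ⟨i, hi⟩ := exists_eq_maxC x
  have hgap := hx.le_sub_of_lt (hi ▸ hjmin ▸ h)
  refine minC_eq_of_forall_ge (fun k => ?_) j ?_
  · have := minC_le x k
    by_cases hk : k ∈ maxIdx n x
    · rw [Pi.sub_apply, eVec_apply, if_pos hk, mem_maxIdx.mp hk]
      omega
    · rw [Pi.sub_apply, eVec_apply, if_neg hk]
      omega
  · rw [Pi.sub_apply, eVec_apply, if_neg hj, hjmin]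
    ring

lemma inV.maxC_sub_minC_sub_eVec_maxIdx (hx : inV n x) (h : minC n x < maxC n x) :
    maxC n (x - eVec n (maxIdx n x)) - minC n (x - eVec n (maxIdx n x))
      = maxC n x - minC n x - (n + 1) := by
  rw [hx.maxC_sub_eVec_maxIdx, hx.minC_sub_eVec_maxIdx h]
  ring

end maxIdx

lemma exists_walk_length_eq (k : ℕ) (x y : {x : Fin (n+1) → ℤ // inV n x})
    (h : maxC n (x.1 - y.1) - minC n (x.1 - y.1) = k * (n + 1)) :
    ∃ p : (G n).Walk x y, p.length = k := by
  induction k generalizing x with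
  | zero =>
    have hxy : x = y :=
      Subtype.ext <| sub_eq_zero.mp <| (x.2.sub y.2).eq_zero_of_maxC_eq_minC (by simp at h; omega)
    exact hxy ▸ ⟨.nil, rfl⟩
  | succ k ih =>
    set S := maxIdx n (x.1 - y.1)
    have hlt : minC n (x.1 - y.1) < maxC n (x.1 - y.1) := by push_cast at h; nlinarith
    let x' : {x : Fin (n+1) → ℤ // inV n x} := ⟨x.1 - eVec n S, x.2.sub (inV_eVec S)⟩
    have hadj : (G n).Adj x x' := by
      change isEdge n (x.1 - eVec n S - x.1)
      rw [sub_sub_cancel_left]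
      exact isEdge_neg (isEdge_eVec (maxIdx_nonempty _) (maxIdx_ne_univ hlt))
    have hx'y : x'.1 - y.1 = x.1 - y.1 - eVec n S := sub_right_comm _ _ _
    obtain ⟨p, hp⟩ := ih x' <| by
      rw [hx'y, (x.2.sub y.2).maxC_sub_minC_sub_eVec_maxIdx hlt, h]
      push_cast
      ring
    exact ⟨.cons hadj p, by simp [hp]⟩

theorem stmt18_general (n : ℕ) (x y : {x : Fin (n+1) → ℤ // inV n x}) :
    ∃ p : (G n).Walk x y,
      (p.length : ℤ) = (maxC n (x.1 - y.1) - minC n (x.1 - y.1)) / ((n : ℤ) + 1) := by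
  obtain ⟨k, hk⟩ := (x.2.sub y.2).exists_maxC_sub_minC_eq
  obtain ⟨p, hp⟩ := exists_walk_length_eq k x y hk
  exact ⟨p, by rw [hp, hk, Int.mul_ediv_cancel _ (by omega)]⟩

/-- G is connected; between any two vertices there is a path of
length (max(x−y) − min(x−y))/(n+1). -/
theorem stmt18 (n : ℕ) (hn : 1 ≤ n) (x y : {x : Fin (n+1) → ℤ // inV n x}) :
    ∃ p : (G n).Walk x y,
      (p.length : ℤ) = (maxC n (x.1 - y.1) - minC n (x.1 - y.1)) / ((n : ℤ) + 1) :=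
  stmt18_general n x y
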